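/- Suppose B ≥ 2(1 − p − s)²/((p + s)(2 − p − s)), (p − s)B ≥ p + s, and η satisfies (p + s)²(2 − p − s)/(2p(1 − p − s)²) + s/p ≤ η ≤ 1. Then there exists exactly one Ψ in the interval [p + s, (p − s)B] such that Ψ·A₁(Ψ) = (ηp − s)·R(Ψ). -/
import Mathlib


/-- Requesters' share. -/
noncomputable def R (p s Ψ : ℝ) : ℝ := (1 - Ψ) * (1 - p - s)

/-- Agents' share in the high-benefit regime. -/
noncomputable def A₁ (p s Ψ : ℝ) : ℝ := ((2 * Ψ - p - s) * (p + s)) / 2 + Ψ * (1 - p - s)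

set_option maxHeartbeats 1000000 in
theorem stmt_7 (p s B η : ℝ) (hs : 0 < s) (hsp : s < p) (hps : p + s < 1) (hB : 0 < B)
    (hη₀ : s / p ≤ η) (hη₁ : η ≤ 1)
    (hBge : B ≥ 2 * (1 - p - s) ^ 2 / ((p + s) * (2 - p - s)))
    (hcap : p + s ≤ (p - s) * B)
    (hηlo : (p + s) ^ 2 * (2 - p - s) / (2 * p * (1 - p - s) ^ 2) + s / p ≤ η) :
    ∃! Ψ : ℝ, Ψ ∈ Set.Icc (p + s) ((p - s) * B) ∧
      Ψ * A₁ p s Ψ = (η * p - s) * R p s Ψ := by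
  have hp : 0 < p := hs.trans hsp
  have hL : 0 < 1 - p - s := by linarith
  have ha : 0 < p + s := by linarith
  have hd : 0 < p - s := by linarith
  have hsp' : s ≤ η * p := by
    have := (div_le_iff₀ hp).mp hη₀; linarith
  have hc0 : 0 ≤ η * p - s := by linarith
  have hcdl : η * p - s ≤ p - s := by nlinarith
  have hkey : (p + s) ^ 2 * (2 - p - s) ≤ 2 * (η * p - s) * (1 - p - s) ^ 2 := by
    have h1 : (p + s) ^ 2 * (2 - p - s) / (2 * p * (1 - p - s) ^ 2) ≤ η - s / p := by
      linarith
    rw [div_le_iff₀ (by positivity)] at h1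
    have h2 : s / p * p = s := div_mul_cancel₀ s hp.ne'
    nlinarith [h1]
  have hBkey : 2 * (1 - p - s) ^ 2 ≤ B * ((p + s) * (2 - p - s)) := by
    have h2a : 0 < (p + s) * (2 - p - s) := by nlinarith
    rw [ge_iff_le, div_le_iff₀ h2a] at hBge
    linarith
  set T := (p - s) * B with hT
  have haT : p + s ≤ T := hcap
  have hTpos : 0 < T := lt_of_lt_of_le ha haT
  have hTkey : 2 * (p - s) * (1 - p - s) ^ 2 ≤ T * ((p + s) * (2 - p - s)) := by
    rw [hT]; nlinarith [mul_le_mul_of_nonneg_left hBkey hd.le]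
  set f : ℝ → ℝ := fun Ψ => Ψ * A₁ p s Ψ - (η * p - s) * R p s Ψ with hf
  have hFa : f (p + s) ≤ 0 := by
    simp only [hf, A₁, R]; nlinarith [hkey]
  have hFT : 0 ≤ f T := by
    simp only [hf, A₁, R]
    rcases le_or_gt T 1 with h1 | h1
    · have k1 : 0 ≤ T * (T - (p + s)) := mul_nonneg hTpos.le (by linarith)
      have k3 : 0 ≤ (p - s) * (1 - p - s) * (T - (p + s)) :=
        mul_nonneg (mul_nonneg hd.le hL.le) (by linarith)
      have k4 : 0 ≤ ((p - s) - (η * p - s)) * ((1 - p - s) * (1 - T)) :=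
        mul_nonneg (by nlinarith) (mul_nonneg hL.le (by linarith))
      linarith [hTkey, k1, k3, k4]
    · have k1 : 0 ≤ (η * p - s) * ((1 - p - s) * (T - 1)) :=
        mul_nonneg hc0 (mul_nonneg hL.le (by linarith))
      have k2 : 0 ≤ T * (T - (p + s) ^ 2 / 2) :=
        mul_nonneg hTpos.le (by nlinarith)
      linarith [k1, k2]
  have hcont : ContinuousOn f (Set.Icc (p + s) T) := by
    simp only [hf, A₁, R]; fun_prop
  have h0 : (0 : ℝ) ∈ Set.Icc (f (p + s)) (f T) := ⟨hFa, hFT⟩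
  obtain ⟨Ψ, hΨmem, hΨeq⟩ := intermediate_value_Icc haT hcont h0
  refine ⟨Ψ, ⟨hΨmem, by simp only [hf] at hΨeq; linarith [hΨeq]⟩, ?_⟩
  rintro y ⟨⟨hy1, hy2⟩, hyeq⟩
  have hx1 := hΨmem.1
  have hΨeq' : Ψ * A₁ p s Ψ = (η * p - s) * R p s Ψ := by
    simp only [hf] at hΨeq; linarith
  have hfac : (y - Ψ) * (y + Ψ - (p + s) ^ 2 / 2 + (η * p - s) * (1 - p - s)) = 0 := by
    simp only [A₁, R] at hyeq hΨeq'
    nlinarith [hyeq, hΨeq']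
  rcases mul_eq_zero.mp hfac with h | h
  · linarith [sub_eq_zero.mp h]
  · exfalso
    have : 0 < y + Ψ - (p + s) ^ 2 / 2 + (η * p - s) * (1 - p - s) := by
      nlinarith [mul_nonneg hc0 hL.le]
    linarith
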